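/- Under the data-processing/change-of-measure framework: if for all events E in the stopped σ-algebra F_τ we have Q(E) = E_P[1_E·exp(−Z_τ)], and if A ∈ F_τ satisfies P(A) ≥ 1−ε and Q(A) ≤ ε for some ε ∈ (0, 1/2), then E_P[Z_τ] ≥ d(ε, 1−ε) = ε·log(ε/(1−ε)) + (1−ε)·log((1−ε)/ε), where d(x,y) is the binary relative entropy. -/

import Mathlib

/-!
Integrating the tangent-line bound `w ≥ log c + 1 - c e^{-w}` against `P` over a set `S`, with
`c = P(S) / Q(S)`, gives `∫_S W dP ≥ P(S) log (P(S) / Q(S))`; adding this for `S = A` and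
`S = Aᶜ` gives `E_P[W] ≥ d(P(A), Q(A))`, the data-processing inequality for the partition
`{A, Aᶜ}`. The binary relative entropy `d(p, q)` increases in `p` and decreases in `q` on the
region `q ≤ p`, so `d(P(A), Q(A)) ≥ d(1 - ε, ε)`.
-/

open MeasureTheory Real

noncomputable def binKL (p q : ℝ) : ℝ := p * log (p / q) + (1 - p) * log ((1 - p) / (1 - q))

lemma sub_le_mul_log_div {x y : ℝ} (hx : 0 ≤ x) (hy : 0 < y) : x - y ≤ x * log (x / y) := by
  rcases hx.eq_or_lt with rfl | hx
  · simpa using hy.le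
  · have := one_sub_inv_le_log_of_pos (div_pos hx hy)
    calc x - y = x * (1 - (x / y)⁻¹) := by field_simp
      _ ≤ x * log (x / y) := by gcongr

lemma mul_one_sub_div_le_mul_log_div {x a b : ℝ} (hx : 0 ≤ x) (ha : 0 < a) (hb : 0 < b) :
    x * (1 - b / a) ≤ x * log (a / b) :=
  mul_le_mul_of_nonneg_left (by simpa using one_sub_inv_le_log_of_pos (div_pos ha hb)) hx

lemma mul_log_div_eq_add {x y z : ℝ} (hx : 0 ≤ x) (hy : 0 < y) (hz : 0 < z) :
    x * log (x / z) = x * log (x / y) + x * log (y / z) := by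
  rcases hx.eq_or_lt with rfl | hx
  · simp
  · rw [← mul_add, ← log_mul (by positivity) (by positivity), div_mul_div_cancel₀ hy.ne']

section binKL

variable {p q r : ℝ}

lemma binKL_eq_binKL_add (hp0 : 0 ≤ p) (hp1 : p ≤ 1) (hq0 : 0 < q) (hq1 : q < 1)
    (hr0 : 0 < r) (hr1 : r < 1) :
    binKL p q = binKL p r + (p * log (r / q) + (1 - p) * log ((1 - r) / (1 - q))) := by
  rw [binKL, binKL, mul_log_div_eq_add hp0 hr0 hq0,
    mul_log_div_eq_add (sub_nonneg.2 hp1) (sub_pos.2 hr1) (sub_pos.2 hq1)]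
  ring

lemma binKL_nonneg (hp0 : 0 ≤ p) (hp1 : p ≤ 1) (hq0 : 0 < q) (hq1 : q < 1) :
    0 ≤ binKL p q := by
  have h₁ := sub_le_mul_log_div hp0 hq0
  have h₂ := sub_le_mul_log_div (sub_nonneg.2 hp1) (sub_pos.2 hq1)
  rw [binKL]
  linarith

lemma binKL_le_binKL_of_le_right (hp1 : p ≤ 1) (hq0 : 0 < q) (hqr : q ≤ r) (hrp : r ≤ p)
    (hr1 : r < 1) : binKL p r ≤ binKL p q := by
  have hr0 : 0 < r := hq0.trans_le hqr
  have hp0 : 0 ≤ p := hr0.le.trans hrp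
  have h₁ := mul_one_sub_div_le_mul_log_div hp0 hr0 hq0
  have h₂ := mul_one_sub_div_le_mul_log_div (sub_nonneg.2 hp1) (sub_pos.2 hr1)
    (by linarith : 0 < 1 - q)
  have h₃ : p * (1 - q / r) + (1 - p) * (1 - (1 - q) / (1 - r)) =
      (r - q) * (p - r) / (r * (1 - r)) := by
    field_simp [(sub_pos.2 hr1).ne']
    ring
  have h₄ : 0 ≤ (r - q) * (p - r) / (r * (1 - r)) := by
    apply div_nonneg (mul_nonneg _ _) (mul_nonneg _ _) <;> linarith
  rw [binKL_eq_binKL_add hp0 hp1 hq0 (by linarith) hr0 hr1]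
  linarith

lemma binKL_le_binKL_of_le_left (hp1 : p ≤ 1) (hq0 : 0 < q) (hqr : q ≤ r) (hrp : r ≤ p)
    (hr1 : r < 1) : binKL r q ≤ binKL p q := by
  have hr0 : 0 < r := hq0.trans_le hqr
  have hq1 : q < 1 := by linarith
  have hlog : log ((1 - r) / (1 - q)) ≤ log (r / q) := by
    have : (1 - r) / (1 - q) ≤ r / q :=
      (div_le_one_of_le₀ (by linarith) (by linarith)).trans ((one_le_div hq0).2 hqr)
    exact log_le_log (div_pos (by linarith) (by linarith)) this
  have := binKL_nonneg (hr0.le.trans hrp) hp1 hr0 hr1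
  rw [binKL_eq_binKL_add (hr0.le.trans hrp) hp1 hq0 hq1 hr0 hr1, binKL]
  linarith [mul_le_mul_of_nonneg_left hlog (sub_nonneg.2 hrp)]

end binKL

lemma log_add_one_sub_mul_exp_neg_le {c : ℝ} (hc : 0 < c) (w : ℝ) :
    log c + 1 - c * exp (-w) ≤ w := by
  have := add_one_le_exp (log c + -w)
  rw [exp_add, exp_log hc] at this
  linarith

section ChangeOfMeasure

variable {Ω : Type*} {m0 : MeasurableSpace Ω}

lemma setIntegral_exp_pos {P : Measure Ω} {f : Ω → ℝ} {S : Set Ω} (hS : P S ≠ 0)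
    (hf : IntegrableOn (fun ω ↦ exp (f ω)) S P) : 0 < ∫ ω in S, exp (f ω) ∂P :=
  have : NeZero (P.restrict S) := ⟨by simpa [Measure.restrict_eq_zero] using hS⟩
  integral_exp_pos hf

lemma mul_log_div_le_setIntegral (P Q : Measure Ω) [IsFiniteMeasure P] {W : Ω → ℝ} {S : Set Ω}
    (hW : IntegrableOn W S P) (hexp : IntegrableOn (fun ω ↦ exp (-W ω)) S P)
    (hQ : Q.real S = ∫ ω in S, exp (-W ω) ∂P) :
    P.real S * log (P.real S / Q.real S) ≤ ∫ ω in S, W ω ∂P := by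
  set p := P.real S
  rcases (measureReal_nonneg : 0 ≤ p).eq_or_lt with hp | hp
  · have : P.restrict S = 0 := Measure.restrict_eq_zero.2 ((measureReal_eq_zero_iff).1 hp.symm)
    simp [p, ← hp, this]
  have hPS : P S ≠ 0 := fun h ↦ hp.ne' (by simp [Measure.real, h])
  have hq : 0 < Q.real S := hQ ▸ setIntegral_exp_pos hPS hexp
  have hc : 0 < p / Q.real S := div_pos hp hq
  calc p * log (p / Q.real S)
      = ∫ ω in S, (log (p / Q.real S) + 1 - p / Q.real S * exp (-W ω)) ∂P := by
        rw [integral_sub (integrable_const _) (hexp.const_mul _), integral_const_mul,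
          setIntegral_const, ← hQ]
        field_simp
        ring
    _ ≤ ∫ ω in S, W ω ∂P :=
        integral_mono ((integrable_const _).sub (hexp.const_mul _)) hW
          (fun ω ↦ log_add_one_sub_mul_exp_neg_le hc (W ω))

lemma binKL_le_integral (P Q : Measure Ω) [IsProbabilityMeasure P] [IsProbabilityMeasure Q]
    {W : Ω → ℝ} (hW : Integrable W P) (hexp : Integrable (fun ω ↦ exp (-W ω)) P)
    {A : Set Ω} (hA : MeasurableSet A) (hQA : Q.real A = ∫ ω in A, exp (-W ω) ∂P)
    (hQAc : Q.real Aᶜ = ∫ ω in Aᶜ, exp (-W ω) ∂P) :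
    binKL (P.real A) (Q.real A) ≤ ∫ ω, W ω ∂P := by
  have hAc := mul_log_div_le_setIntegral P Q hW.integrableOn hexp.integrableOn hQAc
  rw [probReal_compl_eq_one_sub hA, probReal_compl_eq_one_sub hA] at hAc
  rw [← integral_add_compl hA hW]
  exact add_le_add (mul_log_div_le_setIntegral P Q hW.integrableOn hexp.integrableOn hQA) hAc

end ChangeOfMeasure

theorem stmt18_general {Ω : Type*} {m0 : MeasurableSpace Ω} (P Q : Measure Ω)
    [IsProbabilityMeasure P] [IsProbabilityMeasure Q]
    (m : MeasurableSpace Ω) (hm : m ≤ m0)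
    (W : Ω → ℝ) (hWint : Integrable W P)
    (hchange : ∀ E : Set Ω, MeasurableSet[m] E →
      (Q E).toReal = ∫ ω in E, Real.exp (-(W ω)) ∂P)
    (ε : ℝ) (hε0 : 0 < ε) (hε12 : ε < 1 / 2)
    (A : Set Ω) (hA : MeasurableSet[m] A)
    (hPA : 1 - ε ≤ (P A).toReal) (hQA : (Q A).toReal ≤ ε) :
    ε * Real.log (ε / (1 - ε)) + (1 - ε) * Real.log ((1 - ε) / ε) ≤ ∫ ω, W ω ∂P := by
  simp only [← measureReal_def] at hchange hPA hQA
  have hexp : Integrable (fun ω ↦ exp (-W ω)) P := by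
    have h := hchange Set.univ MeasurableSet.univ
    rw [probReal_univ, Measure.restrict_univ] at h
    exact .of_integral_ne_zero (h ▸ one_ne_zero)
  have hPA0 : P A ≠ 0 := fun h ↦ by simp [Measure.real, h] at hPA; linarith
  have hQA0 : 0 < Q.real A := (hchange A hA) ▸ setIntegral_exp_pos hPA0 hexp.integrableOn
  calc ε * log (ε / (1 - ε)) + (1 - ε) * log ((1 - ε) / ε) = binKL (1 - ε) ε := by
        rw [binKL, sub_sub_cancel, add_comm]
    _ ≤ binKL (P.real A) ε :=
        binKL_le_binKL_of_le_left measureReal_le_one hε0 (by linarith) hPA (by linarith)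
    _ ≤ binKL (P.real A) (Q.real A) :=
        binKL_le_binKL_of_le_right measureReal_le_one hQA0 hQA (by linarith) (by linarith)
    _ ≤ ∫ ω, W ω ∂P :=
        binKL_le_integral P Q hWint hexp (hm A hA) (hchange A hA) (hchange Aᶜ hA.compl)

/-- If `Q(E) = E_P[1_E exp(-W)]` for all events `E` in a sub-σ-algebra `m`
(with `W` the `m`-measurable log-likelihood ratio of `P` w.r.t. `Q`), and `A ∈ m` has
`P(A) ≥ 1-ε`, `Q(A) ≤ ε` for some `ε ∈ (0,1/2)`, then
`E_P[W] ≥ d(ε,1-ε) = ε log(ε/(1-ε)) + (1-ε) log((1-ε)/ε)`. -/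
theorem stmt18 {Ω : Type*} {m0 : MeasurableSpace Ω} (P Q : Measure Ω)
    [IsProbabilityMeasure P] [IsProbabilityMeasure Q]
    (m : MeasurableSpace Ω) (hm : m ≤ m0)
    (W : Ω → ℝ) (hWmeas : StronglyMeasurable[m] W) (hWint : Integrable W P)
    (hchange : ∀ E : Set Ω, MeasurableSet[m] E →
      (Q E).toReal = ∫ ω in E, Real.exp (-(W ω)) ∂P)
    (ε : ℝ) (hε0 : 0 < ε) (hε12 : ε < 1 / 2)
    (A : Set Ω) (hA : MeasurableSet[m] A)
    (hPA : 1 - ε ≤ (P A).toReal) (hQA : (Q A).toReal ≤ ε) :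
    ε * Real.log (ε / (1 - ε)) + (1 - ε) * Real.log ((1 - ε) / ε) ≤ ∫ ω, W ω ∂P :=
  stmt18_general P Q m hm W hWint hchange ε hε0 hε12 A hA hPA hQA
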